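/- Assume ‖Z₀‖² ≤ ‖F‖/16 and that 𝒜 satisfies the RIP of order 2r+1 with constant δ < 1. Then, for all integers t with 0 ≤ t ≤ ln(‖F‖/(16 min{k, n₁+n₂}‖Z₀‖²))/(3 ln(1 + μ‖F‖)), it holds that ‖E_t‖ ≤ (16/‖F‖) · min{k, n₁+n₂} · (1 + μ‖F‖)^{3t} · ‖Z₀‖³ ≤ ‖Z₀‖. -/

import Mathlib

open Matrix MeasureTheory ProbabilityTheory

noncomputable section

namespace AsymMatrixSensing

/-- Euclidean norm of a real vector. -/
def euclNorm {ι : Type*} [Fintype ι] (v : ι → ℝ) : ℝ :=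
  Real.sqrt (∑ i, v i ^ 2)

/-- Spectral norm of a real matrix. -/
def specNorm {ι₁ ι₂ : Type*} [Fintype ι₁] [Fintype ι₂] (M : Matrix ι₁ ι₂ ℝ) : ℝ :=
  sSup {c : ℝ | ∃ x : ι₂ → ℝ, euclNorm x ≤ 1 ∧ c = euclNorm (M.mulVec x)}

/-- Frobenius norm of a real matrix. -/
def frobNorm {ι₁ ι₂ : Type*} [Fintype ι₁] [Fintype ι₂] (M : Matrix ι₁ ι₂ ℝ) : ℝ :=
  Real.sqrt (∑ i, ∑ j, M i j ^ 2)

/-- Nuclear norm of a real matrix (characterized by duality with the spectral norm). -/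
def nucNorm {ι₁ ι₂ : Type*} [Fintype ι₁] [Fintype ι₂] (M : Matrix ι₁ ι₂ ℝ) : ℝ :=
  sSup {c : ℝ | ∃ B : Matrix ι₁ ι₂ ℝ, specNorm B ≤ 1 ∧ c = ∑ i, ∑ j, M i j * B i j}

/-- Smallest singular value `σ_{min(a,b)}(M)` of a matrix. -/
def sigmaMin {ι₁ ι₂ : Type*} [Fintype ι₁] [Fintype ι₂] (M : Matrix ι₁ ι₂ ℝ) : ℝ :=
  max (sInf {c : ℝ | ∃ x : ι₂ → ℝ, euclNorm x = 1 ∧ c = euclNorm (M.mulVec x)})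
      (sInf {c : ℝ | ∃ y : ι₁ → ℝ, euclNorm y = 1 ∧ c = euclNorm (Mᵀ.mulVec y)})

/-- Smallest nonzero singular value `σ_rank(M)`: the minimum of `‖Mx‖` over unit
vectors `x` orthogonal to the kernel of `M`. -/
def sigmaPos {ι₁ ι₂ : Type*} [Fintype ι₁] [Fintype ι₂] (M : Matrix ι₁ ι₂ ℝ) : ℝ :=
  sInf {c : ℝ | ∃ x : ι₂ → ℝ, euclNorm x = 1 ∧
    (∀ y : ι₂ → ℝ, M.mulVec y = 0 → x ⬝ᵥ y = 0) ∧ c = euclNorm (M.mulVec x)}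

/-- Condition number `κ = ‖M‖ / σ_min(M)`. -/
def condNum {ι₁ ι₂ : Type*} [Fintype ι₁] [Fintype ι₂] (M : Matrix ι₁ ι₂ ℝ) : ℝ :=
  specNorm M / sigmaPos M

/-- Trace inner product `⟨M, N⟩ = trace(Mᵀ N)`. -/
def minner {ι₁ ι₂ : Type*} [Fintype ι₁] [Fintype ι₂] (M N : Matrix ι₁ ι₂ ℝ) : ℝ :=
  ∑ i, ∑ j, M i j * N i j

/-- `P` is a matrix with orthonormal columns spanning the column space of `M`. -/
def IsOrthCol {ι κ₁ κ₂ : Type*} [Fintype ι] [Fintype κ₁] [Fintype κ₂] [DecidableEq κ₂]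
    (P : Matrix ι κ₂ ℝ) (M : Matrix ι κ₁ ℝ) : Prop :=
  Pᵀ * P = 1 ∧ (∃ C : Matrix κ₁ κ₂ ℝ, P = M * C) ∧ P * Pᵀ * M = M

/-- `L` has orthonormal columns spanning the subspace spanned by eigenvectors of the
symmetric matrix `F` corresponding to its `r` largest eigenvalues. -/
def IsTopEigenspace {ι : Type*} [Fintype ι] [DecidableEq ι] {r : ℕ} (F : Matrix ι ι ℝ)
    (L : Matrix ι (Fin r) ℝ) : Prop :=
  Lᵀ * L = 1 ∧ ∃ d : Fin r → ℝ, F * L = L * Matrix.diagonal d ∧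
    ∀ (v : ι → ℝ) (lam : ℝ), v ≠ 0 → F.mulVec v = lam • v →
      Lᵀ.mulVec v = 0 → ∀ i, lam ≤ d i

variable {n₁ n₂ m k r : ℕ}

/-- The measurement operator `𝒜`, given by `[𝒜(Z)]ᵢ = ⟨Aᵢ, Z⟩`. -/
def calA (A : Fin m → Matrix (Fin n₁) (Fin n₂) ℝ) (Z : Matrix (Fin n₁) (Fin n₂) ℝ) :
    Fin m → ℝ := fun i => minner (A i) Z

/-- The restricted isometry property of order `s` with constant `δ`. -/
def HasRIP (A : Fin m → Matrix (Fin n₁) (Fin n₂) ℝ) (s : ℕ) (δ : ℝ) : Prop :=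
  ∀ M : Matrix (Fin n₁) (Fin n₂) ℝ, M.rank ≤ s →
    (1 - δ) * frobNorm M ^ 2 ≤ ∑ i, calA A M i ^ 2 ∧
      ∑ i, calA A M i ^ 2 ≤ (1 + δ) * frobNorm M ^ 2

/-- `𝒜*𝒜`. -/
def AstarA (A : Fin m → Matrix (Fin n₁) (Fin n₂) ℝ) (Z : Matrix (Fin n₁) (Fin n₂) ℝ) :
    Matrix (Fin n₁) (Fin n₂) ℝ := ∑ i, minner (A i) Z • A i

/-- The symmetrization `sym(X) = [[0, X], [Xᵀ, 0]]`. -/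
def symMat (X : Matrix (Fin n₁) (Fin n₂) ℝ) :
    Matrix (Fin n₁ ⊕ Fin n₂) (Fin n₁ ⊕ Fin n₂) ℝ := Matrix.fromBlocks 0 X Xᵀ 0

/-- The symmetrized measurement matrices `Bᵢ = (1/√2)[[0, Aᵢ], [Aᵢᵀ, 0]]`. -/
def Bmat (A : Fin m → Matrix (Fin n₁) (Fin n₂) ℝ) (i : Fin m) :
    Matrix (Fin n₁ ⊕ Fin n₂) (Fin n₁ ⊕ Fin n₂) ℝ :=
  (Real.sqrt 2)⁻¹ • Matrix.fromBlocks 0 (A i) (A i)ᵀ 0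

/-- `ℬ*ℬ`. -/
def BstarB (A : Fin m → Matrix (Fin n₁) (Fin n₂) ℝ)
    (S : Matrix (Fin n₁ ⊕ Fin n₂) (Fin n₁ ⊕ Fin n₂) ℝ) :
    Matrix (Fin n₁ ⊕ Fin n₂) (Fin n₁ ⊕ Fin n₂) ℝ :=
  ∑ i, minner (Bmat A i) S • Bmat A i

/-- The factorized gradient descent iterates `(V_t, W_t)`. -/
def iter (A : Fin m → Matrix (Fin n₁) (Fin n₂) ℝ) (X : Matrix (Fin n₁) (Fin n₂) ℝ)
    (μ : ℝ) (V₀ : Matrix (Fin n₁) (Fin k) ℝ) (W₀ : Matrix (Fin n₂) (Fin k) ℝ) :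
    ℕ → Matrix (Fin n₁) (Fin k) ℝ × Matrix (Fin n₂) (Fin k) ℝ
  | 0 => (V₀, W₀)
  | t + 1 =>
    let p := iter A X μ V₀ W₀ t
    let G := AstarA A (p.1 * p.2ᵀ - X)
    (p.1 - μ • (G * p.2), p.2 - μ • (Gᵀ * p.1))

/-- The vertical stacking `(1/√2)[V; W]`. -/
def Zstack {κ : ℕ} (V : Matrix (Fin n₁) (Fin κ) ℝ) (W : Matrix (Fin n₂) (Fin κ) ℝ) :
    Matrix (Fin n₁ ⊕ Fin n₂) (Fin κ) ℝ :=
  (Real.sqrt 2)⁻¹ • Matrix.fromRows V W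

/-- `Z_t = (1/√2)[V_t; W_t]`. -/
def Zit (A : Fin m → Matrix (Fin n₁) (Fin n₂) ℝ) (X : Matrix (Fin n₁) (Fin n₂) ℝ)
    (μ : ℝ) (V₀ : Matrix (Fin n₁) (Fin k) ℝ) (W₀ : Matrix (Fin n₂) (Fin k) ℝ) (t : ℕ) :
    Matrix (Fin n₁ ⊕ Fin n₂) (Fin k) ℝ :=
  Zstack (iter A X μ V₀ W₀ t).1 (iter A X μ V₀ W₀ t).2

/-- `Z̃_t = (1/√2)[V_t; −W_t]`. -/
def Ztil (A : Fin m → Matrix (Fin n₁) (Fin n₂) ℝ) (X : Matrix (Fin n₁) (Fin n₂) ℝ)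
    (μ : ℝ) (V₀ : Matrix (Fin n₁) (Fin k) ℝ) (W₀ : Matrix (Fin n₂) (Fin k) ℝ) (t : ℕ) :
    Matrix (Fin n₁ ⊕ Fin n₂) (Fin k) ℝ :=
  Zstack (iter A X μ V₀ W₀ t).1 (-(iter A X μ V₀ W₀ t).2)

/-- `Δ_t = (Id − ℬ*ℬ)(Z_tZ_tᵀ − Z̃_tZ̃_tᵀ − sym(X))`. -/
def Δit (A : Fin m → Matrix (Fin n₁) (Fin n₂) ℝ) (X : Matrix (Fin n₁) (Fin n₂) ℝ)
    (μ : ℝ) (V₀ : Matrix (Fin n₁) (Fin k) ℝ) (W₀ : Matrix (Fin n₂) (Fin k) ℝ) (t : ℕ) :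
    Matrix (Fin n₁ ⊕ Fin n₂) (Fin n₁ ⊕ Fin n₂) ℝ :=
  let D := Zit A X μ V₀ W₀ t * (Zit A X μ V₀ W₀ t)ᵀ
    - Ztil A X μ V₀ W₀ t * (Ztil A X μ V₀ W₀ t)ᵀ - symMat X
  D - BstarB A D

/-- The block diagonal matrix `diag(Id_{n₁}, −Id_{n₂})`. -/
def flipSign (n₁ n₂ : ℕ) : Matrix (Fin n₁ ⊕ Fin n₂) (Fin n₁ ⊕ Fin n₂) ℝ :=
  Matrix.fromBlocks 1 0 0 (-1)

/-- Product Gaussian measure modelling the random initialization pair `(V, W)`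
with i.i.d. standard Gaussian entries. -/
def gaussPair (n₁ n₂ k : ℕ) :
    Measure ((Fin n₁ → Fin k → ℝ) × (Fin n₂ → Fin k → ℝ)) :=
  (Measure.pi fun _ : Fin n₁ => Measure.pi fun _ : Fin k => gaussianReal 0 1).prod
    (Measure.pi fun _ : Fin n₂ => Measure.pi fun _ : Fin k => gaussianReal 0 1)


/-!
The gradient step reads `Z_{t+1} = (1 + μF) Z_t - μ Φ_t Z_t` with `Φ_t = sym(𝒜*𝒜(V_t W_tᵀ))`,
so the error `E_t = Z_t - (1 + μF)ᵗ Z₀` satisfies `E_{t+1} = (1 + μF) E_t - μ Φ_t Z_t`.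
Writing `V_t W_tᵀ` as a sum of `min(k, n₁)` rank-one matrices `u vᵀ`, and using that
`⟨y, 𝒜*𝒜(u vᵀ) x⟩ = ⟨𝒜(u vᵀ), 𝒜(y xᵀ)⟩ ≤ (1 + δ) ‖u‖‖v‖‖y‖‖x‖` by the RIP on rank-one matrices
and Cauchy–Schwarz, gives `‖Φ_t Z_t‖ ≤ 4 min(k, n₁ + n₂) ‖Z_t‖³`. While the claimed bound on
`‖E_t‖` is at most `‖Z₀‖` (this is what the condition on `t` says), `‖Z_t‖ ≤ 2 (1 + μ‖F‖)ᵗ ‖Z₀‖`,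
and the cubic term is absorbed in the induction by the extra factor `(1 + μ‖F‖)³`, because
`(1 + x)³ - (1 + x) - 2x = x² (x + 3) ≥ 0`.
-/

section SpectralNorm

open scoped Matrix.Norms.L2Operator

variable {ι ι₁ ι₂ κ : Type*} [Fintype ι] [Fintype ι₁] [Fintype ι₂] [Fintype κ]

lemma euclNorm_eq_norm (v : ι → ℝ) :
    euclNorm v = ‖(WithLp.toLp 2 v : EuclideanSpace ℝ ι)‖ := by
  simp [euclNorm, EuclideanSpace.norm_eq]

lemma euclNorm_nonneg (v : ι → ℝ) : 0 ≤ euclNorm v := Real.sqrt_nonneg _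

lemma euclNorm_sum_elim_sq (v : ι₁ → ℝ) (w : ι₂ → ℝ) :
    euclNorm (Sum.elim v w) ^ 2 = euclNorm v ^ 2 + euclNorm w ^ 2 := by
  simp only [euclNorm_eq_norm, EuclideanSpace.real_norm_sq_eq, Fintype.sum_sum_type,
    Sum.elim_inl, Sum.elim_inr]

lemma dotProduct_le_euclNorm_mul (v w : ι → ℝ) : v ⬝ᵥ w ≤ euclNorm v * euclNorm w := by
  simpa [euclNorm_eq_norm, EuclideanSpace.inner_toLp_toLp, dotProduct_comm] using
    real_inner_le_norm (WithLp.toLp 2 v : EuclideanSpace ℝ ι) (WithLp.toLp 2 w)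

lemma dotProduct_self_eq_euclNorm_sq (v : ι → ℝ) : v ⬝ᵥ v = euclNorm v ^ 2 := by
  rw [euclNorm, Real.sq_sqrt (Finset.sum_nonneg fun i _ => sq_nonneg _)]
  simp only [dotProduct, sq]

variable [DecidableEq ι₂]

lemma euclNorm_mulVec_le (M : Matrix ι₁ ι₂ ℝ) (x : ι₂ → ℝ) :
    euclNorm (M *ᵥ x) ≤ ‖M‖ * euclNorm x := by
  simpa [euclNorm_eq_norm] using M.l2_opNorm_mulVec (WithLp.toLp 2 x)

lemma norm_le_of_euclNorm_mulVec_le {M : Matrix ι₁ ι₂ ℝ} {c : ℝ} (hc : 0 ≤ c)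
    (h : ∀ x, euclNorm (M *ᵥ x) ≤ c * euclNorm x) : ‖M‖ ≤ c := by
  rw [Matrix.l2_opNorm_def]
  refine ContinuousLinearMap.opNorm_le_bound _ hc fun x => ?_
  simpa [euclNorm_eq_norm, Matrix.toLpLin_apply] using h (WithLp.ofLp x)

lemma specNorm_eq_norm (M : Matrix ι₁ ι₂ ℝ) : specNorm M = ‖M‖ := by
  rw [Matrix.l2_opNorm_def, ← ContinuousLinearMap.sSup_unitClosedBall_eq_norm, specNorm]
  congr 1
  ext c
  simp only [Set.mem_ofPred_eq, Set.mem_image, Metric.mem_closedBall, dist_zero_right]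
  constructor
  · rintro ⟨x, hx, rfl⟩
    exact ⟨WithLp.toLp 2 x, by rwa [← euclNorm_eq_norm],
      by simp [euclNorm_eq_norm, Matrix.toLpLin_apply]⟩
  · rintro ⟨x, hx, rfl⟩
    exact ⟨WithLp.ofLp x, by simpa [euclNorm_eq_norm] using hx,
      by simp [euclNorm_eq_norm, Matrix.toLpLin_apply]⟩

lemma euclNorm_col_le_norm (M : Matrix ι₁ ι₂ ℝ) (j : ι₂) :
    euclNorm (fun i => M i j) ≤ ‖M‖ := by
  have h := euclNorm_mulVec_le M (Pi.single j 1)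
  rwa [Matrix.mulVec_single_one, show euclNorm (Pi.single j (1 : ℝ)) = 1 by
    simp [euclNorm_eq_norm], mul_one] at h

lemma norm_one_le [DecidableEq ι] : ‖(1 : Matrix ι ι ℝ)‖ ≤ 1 :=
  norm_le_of_euclNorm_mulVec_le zero_le_one fun x => by simp

lemma norm_one_add_smul_le [DecidableEq ι] {μ : ℝ} (hμ : 0 ≤ μ) (F : Matrix ι ι ℝ) :
    ‖1 + μ • F‖ ≤ 1 + μ * ‖F‖ := calc
  ‖1 + μ • F‖ ≤ 1 + ‖μ‖ * ‖F‖ := (norm_add_le _ _).trans (add_le_add norm_one_le (norm_smul_le _ _))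
  _ = 1 + μ * ‖F‖ := by rw [Real.norm_of_nonneg hμ]

lemma norm_transpose [DecidableEq ι₁] (M : Matrix ι₁ ι₂ ℝ) : ‖Mᵀ‖ = ‖M‖ := by
  simpa using M.l2_opNorm_conjTranspose

lemma norm_le_norm_fromRows_left (V : Matrix ι₁ ι₂ ℝ) (W : Matrix κ ι₂ ℝ) :
    ‖V‖ ≤ ‖Matrix.fromRows V W‖ := by
  refine norm_le_of_euclNorm_mulVec_le (norm_nonneg _) fun x => ?_
  refine le_trans ?_ (euclNorm_mulVec_le _ x)
  have h := euclNorm_sum_elim_sq (V *ᵥ x) (W *ᵥ x)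
  rw [← Matrix.fromRows_mulVec] at h
  exact (pow_le_pow_iff_left₀ (euclNorm_nonneg _) (euclNorm_nonneg _) two_ne_zero).mp
    (by nlinarith [sq_nonneg (euclNorm (W *ᵥ x))])

lemma norm_le_norm_fromRows_right (V : Matrix ι₁ ι₂ ℝ) (W : Matrix κ ι₂ ℝ) :
    ‖W‖ ≤ ‖Matrix.fromRows V W‖ := by
  refine norm_le_of_euclNorm_mulVec_le (norm_nonneg _) fun x => ?_
  refine le_trans ?_ (euclNorm_mulVec_le _ x)
  have h := euclNorm_sum_elim_sq (V *ᵥ x) (W *ᵥ x)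
  rw [← Matrix.fromRows_mulVec] at h
  exact (pow_le_pow_iff_left₀ (euclNorm_nonneg _) (euclNorm_nonneg _) two_ne_zero).mp
    (by nlinarith [sq_nonneg (euclNorm (V *ᵥ x))])

lemma norm_mul_norm_le_two_mul_norm_Zstack_sq (V : Matrix (Fin n₁) (Fin k) ℝ)
    (W : Matrix (Fin n₂) (Fin k) ℝ) : ‖V‖ * ‖W‖ ≤ 2 * ‖Zstack V W‖ ^ 2 := by
  have hZ : ‖Matrix.fromRows V W‖ = √2 * ‖Zstack V W‖ := by
    rw [Zstack, norm_smul, ← mul_assoc, Real.norm_of_nonneg (by positivity),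
      mul_inv_cancel₀ (by positivity), one_mul]
  have h2 : (√2) ^ 2 = 2 := Real.sq_sqrt zero_le_two
  calc ‖V‖ * ‖W‖ ≤ ‖Matrix.fromRows V W‖ * ‖Matrix.fromRows V W‖ :=
        mul_le_mul (norm_le_norm_fromRows_left V W) (norm_le_norm_fromRows_right V W)
          (norm_nonneg _) (norm_nonneg _)
    _ = 2 * ‖Zstack V W‖ ^ 2 := by rw [hZ]; linear_combination ‖Zstack V W‖ ^ 2 * h2

lemma norm_symMat_le (C : Matrix (Fin n₁) (Fin n₂) ℝ) : ‖symMat C‖ ≤ ‖C‖ := by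
  refine norm_le_of_euclNorm_mulVec_le (norm_nonneg _) fun x => ?_
  have hx : euclNorm x ^ 2 = euclNorm (x ∘ Sum.inl) ^ 2 + euclNorm (x ∘ Sum.inr) ^ 2 := by
    rw [← euclNorm_sum_elim_sq, Sum.elim_comp_inl_inr]
  have hCx : symMat C *ᵥ x = Sum.elim (C *ᵥ (x ∘ Sum.inr)) (Cᵀ *ᵥ (x ∘ Sum.inl)) := by
    simp [symMat, Matrix.fromBlocks_mulVec]
  have h1 := euclNorm_mulVec_le C (x ∘ Sum.inr)
  have h2 := euclNorm_mulVec_le Cᵀ (x ∘ Sum.inl)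
  rw [norm_transpose] at h2
  refine (pow_le_pow_iff_left₀ (euclNorm_nonneg _)
    (mul_nonneg (norm_nonneg _) (euclNorm_nonneg _)) two_ne_zero).mp ?_
  rw [hCx, euclNorm_sum_elim_sq, mul_pow, hx]
  nlinarith [pow_le_pow_left₀ (euclNorm_nonneg _) h1 2, pow_le_pow_left₀ (euclNorm_nonneg _) h2 2]

end SpectralNorm

section RIP

open scoped Matrix.Norms.L2Operator

variable {A : Fin m → Matrix (Fin n₁) (Fin n₂) ℝ} {s : ℕ} {δ : ℝ}

lemma frobNorm_nonneg {ι₁ ι₂ : Type*} [Fintype ι₁] [Fintype ι₂] (M : Matrix ι₁ ι₂ ℝ) :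
    0 ≤ frobNorm M :=
  Real.sqrt_nonneg _

lemma frobNorm_vecMulVec {ι₁ ι₂ : Type*} [Fintype ι₁] [Fintype ι₂] (u : ι₁ → ℝ) (v : ι₂ → ℝ) :
    frobNorm (Matrix.vecMulVec u v) = euclNorm u * euclNorm v := by
  rw [frobNorm, euclNorm, euclNorm, ← Real.sqrt_mul (Finset.sum_nonneg fun i _ => sq_nonneg _),
    Finset.sum_mul_sum]
  simp [Matrix.vecMulVec_apply, mul_pow]

lemma euclNorm_calA_le (hRIP : HasRIP A s δ) {M : Matrix (Fin n₁) (Fin n₂) ℝ} (hM : M.rank ≤ s) :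
    euclNorm (calA A M) ≤ √(1 + δ) * frobNorm M := by
  calc euclNorm (calA A M) ≤ √((1 + δ) * frobNorm M ^ 2) := Real.sqrt_le_sqrt (hRIP M hM).2
    _ = √(1 + δ) * frobNorm M := by
      rw [Real.sqrt_mul' _ (sq_nonneg _), Real.sqrt_sq (frobNorm_nonneg M)]

lemma minner_vecMulVec {ι₁ ι₂ : Type*} [Fintype ι₁] [Fintype ι₂] (C : Matrix ι₁ ι₂ ℝ)
    (y : ι₁ → ℝ) (x : ι₂ → ℝ) : minner C (Matrix.vecMulVec y x) = y ⬝ᵥ C *ᵥ x := by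
  simp only [minner, Matrix.vecMulVec_apply, dotProduct, Matrix.mulVec, Finset.mul_sum]
  exact Finset.sum_congr rfl fun i _ => Finset.sum_congr rfl fun j _ => by ring

lemma dotProduct_AstarA_mulVec (A : Fin m → Matrix (Fin n₁) (Fin n₂) ℝ)
    (M : Matrix (Fin n₁) (Fin n₂) ℝ) (y : Fin n₁ → ℝ) (x : Fin n₂ → ℝ) :
    y ⬝ᵥ (AstarA A M *ᵥ x) = calA A M ⬝ᵥ calA A (Matrix.vecMulVec y x) := by
  simp only [AstarA, Matrix.sum_mulVec, Matrix.smul_mulVec, dotProduct_sum, dotProduct_smul,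
    smul_eq_mul]
  conv_rhs => rw [dotProduct]
  simp only [calA, minner_vecMulVec]

lemma norm_AstarA_vecMulVec_le (hRIP : HasRIP A s δ) (hs : 1 ≤ s) (hδ : δ ≤ 1)
    (u : Fin n₁ → ℝ) (v : Fin n₂ → ℝ) :
    ‖AstarA A (Matrix.vecMulVec u v)‖ ≤ 2 * (euclNorm u * euclNorm v) := by
  have hcalA : ∀ (u : Fin n₁ → ℝ) (v : Fin n₂ → ℝ),
      euclNorm (calA A (Matrix.vecMulVec u v)) ≤ √2 * (euclNorm u * euclNorm v) := fun u v =>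
    calc _ ≤ √(1 + δ) * frobNorm (Matrix.vecMulVec u v) :=
          euclNorm_calA_le hRIP ((Matrix.rank_vecMulVec_le u v).trans hs)
      _ ≤ √2 * (euclNorm u * euclNorm v) := by
          rw [frobNorm_vecMulVec]
          exact mul_le_mul_of_nonneg_right (Real.sqrt_le_sqrt (by linarith))
            (mul_nonneg (euclNorm_nonneg u) (euclNorm_nonneg v))
  refine norm_le_of_euclNorm_mulVec_le
    (by positivity [euclNorm_nonneg u, euclNorm_nonneg v]) fun x => ?_
  set y := AstarA A (Matrix.vecMulVec u v) *ᵥ x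
  have hy : euclNorm y ^ 2 ≤ 2 * (euclNorm u * euclNorm v) * euclNorm x * euclNorm y := by
    calc euclNorm y ^ 2 = y ⬝ᵥ y := (dotProduct_self_eq_euclNorm_sq y).symm
      _ = calA A (Matrix.vecMulVec u v) ⬝ᵥ calA A (Matrix.vecMulVec y x) :=
          dotProduct_AstarA_mulVec A _ y x
      _ ≤ (√2 * (euclNorm u * euclNorm v)) * (√2 * (euclNorm y * euclNorm x)) :=
          (dotProduct_le_euclNorm_mul _ _).trans (mul_le_mul (hcalA u v) (hcalA y x)
            (euclNorm_nonneg _) (by positivity [euclNorm_nonneg u, euclNorm_nonneg v]))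
      _ = 2 * (euclNorm u * euclNorm v) * euclNorm x * euclNorm y := by
          rw [mul_mul_mul_comm, Real.mul_self_sqrt zero_le_two]; ring
  rcases (euclNorm_nonneg y).eq_or_lt with hy0 | hy0
  · rw [← hy0]; positivity [euclNorm_nonneg u, euclNorm_nonneg v, euclNorm_nonneg x]
  · exact le_of_mul_le_mul_right (by nlinarith) hy0

lemma AstarA_sum {ι : Type*} (A : Fin m → Matrix (Fin n₁) (Fin n₂) ℝ) (S : Finset ι)
    (M : ι → Matrix (Fin n₁) (Fin n₂) ℝ) :
    AstarA A (∑ j ∈ S, M j) = ∑ j ∈ S, AstarA A (M j) := by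
  have hminner : ∀ C : Matrix (Fin n₁) (Fin n₂) ℝ,
      minner C (∑ j ∈ S, M j) = ∑ j ∈ S, minner C (M j) := fun C => by
    simp only [minner, Matrix.sum_apply, Finset.mul_sum]
    rw [Finset.sum_comm (s := S)]
    exact Finset.sum_congr rfl fun _ _ => Finset.sum_comm
  simp only [AstarA, hminner, Finset.sum_smul]
  exact Finset.sum_comm

lemma mul_transpose_eq_sum_vecMulVec {ι₁ ι₂ κ : Type*} [Fintype κ] (U : Matrix ι₁ κ ℝ)
    (W : Matrix ι₂ κ ℝ) : U * Wᵀ = ∑ j, Matrix.vecMulVec (fun i => U i j) (fun i => W i j) := by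
  ext a b
  simp [Matrix.mul_apply, Matrix.sum_apply, Matrix.vecMulVec_apply]

lemma norm_AstarA_mul_transpose_le {κ : Type*} [Fintype κ] [DecidableEq κ]
    (hRIP : HasRIP A s δ) (hs : 1 ≤ s) (hδ : δ ≤ 1)
    (U : Matrix (Fin n₁) κ ℝ) (W : Matrix (Fin n₂) κ ℝ) :
    ‖AstarA A (U * Wᵀ)‖ ≤ 2 * Fintype.card κ * (‖U‖ * ‖W‖) := by
  rw [mul_transpose_eq_sum_vecMulVec, AstarA_sum]
  calc ‖∑ j, AstarA A (Matrix.vecMulVec (fun i => U i j) (fun i => W i j))‖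
        ≤ ∑ j, ‖AstarA A (Matrix.vecMulVec (fun i => U i j) (fun i => W i j))‖ := norm_sum_le _ _
    _ ≤ ∑ _j : κ, 2 * (‖U‖ * ‖W‖) := Finset.sum_le_sum fun j _ =>
        (norm_AstarA_vecMulVec_le hRIP hs hδ _ _).trans (by
          gcongr
          exacts [euclNorm_nonneg _, euclNorm_col_le_norm U j, euclNorm_col_le_norm W j])
    _ = 2 * Fintype.card κ * (‖U‖ * ‖W‖) := by
        simp only [Finset.sum_const, Finset.card_univ, nsmul_eq_mul]; ring

lemma norm_symMat_AstarA_mul_Zstack_le (hRIP : HasRIP A s δ) (hs : 1 ≤ s) (hδ : δ ≤ 1)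
    (V : Matrix (Fin n₁) (Fin k) ℝ) (W : Matrix (Fin n₂) (Fin k) ℝ) :
    ‖symMat (AstarA A (V * Wᵀ)) * Zstack V W‖ ≤ 4 * (min k (n₁ + n₂) : ℕ) * ‖Zstack V W‖ ^ 3 := by
  have hcols := norm_AstarA_mul_transpose_le hRIP hs hδ V W
  have hrows := norm_AstarA_mul_transpose_le hRIP hs hδ 1 (V * Wᵀ)ᵀ
  rw [Matrix.transpose_transpose, Matrix.one_mul, norm_transpose] at hrows
  rw [Fintype.card_fin] at hcols hrows
  have hVW : ‖(1 : Matrix (Fin n₁) (Fin n₁) ℝ)‖ * ‖V * Wᵀ‖ ≤ ‖V‖ * ‖W‖ := calc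
    ‖(1 : Matrix (Fin n₁) (Fin n₁) ℝ)‖ * ‖V * Wᵀ‖ ≤ 1 * (‖V‖ * ‖Wᵀ‖) :=
      mul_le_mul norm_one_le (Matrix.l2_opNorm_mul V Wᵀ) (norm_nonneg _) zero_le_one
    _ = ‖V‖ * ‖W‖ := by rw [one_mul, norm_transpose]
  have hmin : (min k n₁ : ℝ) ≤ (min k (n₁ + n₂) : ℕ) := by
    push_cast; exact min_le_min_left _ (by linarith [(n₂.cast_nonneg : (0 : ℝ) ≤ n₂)])
  calc ‖symMat (AstarA A (V * Wᵀ)) * Zstack V W‖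
        ≤ ‖AstarA A (V * Wᵀ)‖ * ‖Zstack V W‖ :=
          (Matrix.l2_opNorm_mul _ _).trans (by gcongr; exact norm_symMat_le _)
    _ ≤ 2 * min (k : ℝ) n₁ * (‖V‖ * ‖W‖) * ‖Zstack V W‖ := by
      gcongr
      rw [mul_min_of_nonneg _ _ zero_le_two, min_mul_of_nonneg _ _ (by positivity)]
      exact le_min hcols (hrows.trans (by gcongr))
    _ ≤ 2 * (min k (n₁ + n₂) : ℕ) * (2 * ‖Zstack V W‖ ^ 2) * ‖Zstack V W‖ := by
      refine mul_le_mul_of_nonneg_right ?_ (norm_nonneg _)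
      exact mul_le_mul (by gcongr) (norm_mul_norm_le_two_mul_norm_Zstack_sq V W)
        (mul_nonneg (norm_nonneg _) (norm_nonneg _)) (by positivity)
    _ = 4 * (min k (n₁ + n₂) : ℕ) * ‖Zstack V W‖ ^ 3 := by ring

end RIP

section GradientStep

variable (A : Fin m → Matrix (Fin n₁) (Fin n₂) ℝ)

lemma minner_smul_left {ι₁ ι₂ : Type*} [Fintype ι₁] [Fintype ι₂] (c : ℝ) (M N : Matrix ι₁ ι₂ ℝ) :
    minner (c • M) N = c * minner M N := by
  simp only [minner, Matrix.smul_apply, smul_eq_mul, Finset.mul_sum, mul_assoc]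

lemma minner_symMat_symMat (P Y : Matrix (Fin n₁) (Fin n₂) ℝ) :
    minner (symMat P) (symMat Y) = 2 * minner P Y := by
  simp only [minner, symMat, Fintype.sum_sum_type, Matrix.fromBlocks_apply₁₁,
    Matrix.fromBlocks_apply₁₂, Matrix.fromBlocks_apply₂₁, Matrix.fromBlocks_apply₂₂,
    Matrix.zero_apply, Matrix.transpose_apply, zero_mul, Finset.sum_const_zero, zero_add, add_zero]
  rw [Finset.sum_comm (s := Finset.univ (α := Fin n₂))]
  ring

lemma symMat_sum_smul {ι : Type*} (S : Finset ι) (c : ι → ℝ) (P : ι → Matrix (Fin n₁) (Fin n₂) ℝ) :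
    symMat (∑ i ∈ S, c i • P i) = ∑ i ∈ S, c i • symMat (P i) := by
  ext (a | a) (b | b) <;> simp [symMat, Matrix.sum_apply]

lemma BstarB_symMat (Y : Matrix (Fin n₁) (Fin n₂) ℝ) :
    BstarB A (symMat Y) = symMat (AstarA A Y) := by
  have h2 : (√2)⁻¹ * (√2)⁻¹ * 2 = (1 : ℝ) := by
    rw [← mul_inv, Real.mul_self_sqrt zero_le_two, inv_mul_cancel₀ two_ne_zero]
  rw [AstarA, symMat_sum_smul, BstarB]
  refine Finset.sum_congr rfl fun i _ => ?_
  rw [show Bmat A i = (√2)⁻¹ • symMat (A i) from rfl, minner_smul_left, minner_symMat_symMat,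
    smul_smul]
  congr 1
  linear_combination minner (A i) Y * h2

lemma AstarA_sub (M N : Matrix (Fin n₁) (Fin n₂) ℝ) :
    AstarA A (M - N) = AstarA A M - AstarA A N := by
  simp only [AstarA, minner, Matrix.sub_apply, mul_sub, Finset.sum_sub_distrib, sub_smul]

lemma symMat_mul_Zstack (C : Matrix (Fin n₁) (Fin n₂) ℝ) (V : Matrix (Fin n₁) (Fin k) ℝ)
    (W : Matrix (Fin n₂) (Fin k) ℝ) : symMat C * Zstack V W = Zstack (C * W) (Cᵀ * V) := by
  simp [symMat, Zstack, Matrix.fromBlocks_mul_fromRows]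

lemma Zit_succ (X : Matrix (Fin n₁) (Fin n₂) ℝ) (μ : ℝ) (V₀ : Matrix (Fin n₁) (Fin k) ℝ)
    (W₀ : Matrix (Fin n₂) (Fin k) ℝ) (t : ℕ) :
    Zit A X μ V₀ W₀ (t + 1) = (1 + μ • symMat (AstarA A X)) * Zit A X μ V₀ W₀ t
      - μ • (symMat (AstarA A ((iter A X μ V₀ W₀ t).1 * (iter A X μ V₀ W₀ t).2ᵀ))
          * Zit A X μ V₀ W₀ t) := by
  set V := (iter A X μ V₀ W₀ t).1
  set W := (iter A X μ V₀ W₀ t).2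
  have hstep : Zit A X μ V₀ W₀ (t + 1)
      = Zstack V W - μ • (symMat (AstarA A (V * Wᵀ - X)) * Zstack V W) := by
    rw [symMat_mul_Zstack]
    ext (i | i) j <;>
      simp only [Zit, Zstack, iter, Matrix.smul_apply, Matrix.fromRows_apply_inl,
        Matrix.fromRows_apply_inr, Matrix.sub_apply, smul_eq_mul, V, W] <;> ring
  have hsymMat : symMat (AstarA A (V * Wᵀ) - AstarA A X)
      = symMat (AstarA A (V * Wᵀ)) - symMat (AstarA A X) := by
    ext (a | a) (b | b) <;> simp [symMat]
  rw [hstep, AstarA_sub, hsymMat, show Zit A X μ V₀ W₀ t = Zstack V W from rfl]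
  simp only [Matrix.sub_mul, Matrix.add_mul, Matrix.one_mul, Matrix.smul_mul, smul_sub]
  abel

end GradientStep

section PerturbedPowerMethod

open scoped Matrix.Norms.L2Operator

variable {ι κ : Type*} [Fintype ι] [DecidableEq ι] [Fintype κ] [DecidableEq κ]

lemma norm_pow_mul_le {L : Matrix ι ι ℝ} {β : ℝ} (hL : ‖L‖ ≤ β) (Z : Matrix ι κ ℝ) (t : ℕ) :
    ‖L ^ t * Z‖ ≤ β ^ t * ‖Z‖ := by
  induction t with
  | zero => simp
  | succ t ih =>
    rw [pow_succ', Matrix.mul_assoc, pow_succ', mul_assoc]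
    exact (Matrix.l2_opNorm_mul _ _).trans
      (mul_le_mul hL ih (norm_nonneg _) ((norm_nonneg L).trans hL))

theorem norm_sub_pow_mul_le_of_cubic_perturbation {L : Matrix ι ι ℝ} {Z P : ℕ → Matrix ι κ ℝ}
    {β c C : ℝ} (hβ : 1 ≤ β) (hc : 0 ≤ c) (hC : 0 ≤ C) (hL : ‖L‖ ≤ β)
    (hCβ : β * C + 8 * c ≤ β ^ 3 * C) (hZ : ∀ s, Z (s + 1) = L * Z s - P s)
    (hP : ∀ s, ‖P s‖ ≤ c * ‖Z s‖ ^ 3) (t : ℕ) (ht : C * β ^ (3 * t) * ‖Z 0‖ ^ 3 ≤ ‖Z 0‖) :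
    ‖Z t - L ^ t * Z 0‖ ≤ C * β ^ (3 * t) * ‖Z 0‖ ^ 3 := by
  set a := ‖Z 0‖
  have ha : 0 ≤ a := norm_nonneg _
  induction t with
  | zero => simpa using mul_nonneg hC (pow_nonneg ha 3)
  | succ t ih =>
    have hmono : C * β ^ (3 * t) * a ^ 3 ≤ C * β ^ (3 * (t + 1)) * a ^ 3 :=
      mul_le_mul_of_nonneg_right
        (mul_le_mul_of_nonneg_left (pow_le_pow_right₀ hβ (by omega)) hC) (pow_nonneg ha 3)
    have hE := ih (hmono.trans ht)
    have hZt : ‖Z t‖ ≤ 2 * β ^ t * a := calc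
      ‖Z t‖ ≤ ‖Z t - L ^ t * Z 0‖ + ‖L ^ t * Z 0‖ := norm_le_norm_sub_add _ _
      _ ≤ a + β ^ t * a := add_le_add (hE.trans (hmono.trans ht)) (norm_pow_mul_le hL _ t)
      _ ≤ 2 * β ^ t * a := by nlinarith [one_le_pow₀ hβ (n := t)]
    have hPt : ‖P t‖ ≤ 8 * c * β ^ (3 * t) * a ^ 3 := calc
      ‖P t‖ ≤ c * (2 * β ^ t * a) ^ 3 := (hP t).trans (by gcongr)
      _ = 8 * c * β ^ (3 * t) * a ^ 3 := by ring
    have hrec : Z (t + 1) - L ^ (t + 1) * Z 0 = L * (Z t - L ^ t * Z 0) - P t := by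
      rw [hZ, pow_succ', Matrix.mul_assoc, Matrix.mul_sub]
      abel
    calc ‖Z (t + 1) - L ^ (t + 1) * Z 0‖
        ≤ β * (C * β ^ (3 * t) * a ^ 3) + 8 * c * β ^ (3 * t) * a ^ 3 := by
          rw [hrec]
          refine (norm_sub_le _ _).trans (add_le_add ?_ hPt)
          exact (Matrix.l2_opNorm_mul _ _).trans
            (mul_le_mul hL hE (norm_nonneg _) (by linarith))
      _ = (β * C + 8 * c) * β ^ (3 * t) * a ^ 3 := by ring
      _ ≤ β ^ 3 * C * β ^ (3 * t) * a ^ 3 := by gcongr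
      _ = C * β ^ (3 * (t + 1)) * a ^ 3 := by ring

end PerturbedPowerMethod

lemma error_constant_absorbs_perturbation {f μ N : ℝ} (hf : 0 < f) (hμ : 0 ≤ μ) (hN : 0 ≤ N) :
    (1 + μ * f) * (16 / f * N) + 8 * (4 * μ * N) ≤ (1 + μ * f) ^ 3 * (16 / f * N) := by
  have key : (1 + μ * f) ^ 3 * (16 / f * N) - ((1 + μ * f) * (16 / f * N) + 8 * (4 * μ * N))
      = 16 * N * μ ^ 2 * f * (μ * f + 3) := by
    field_simp
    ring
  nlinarith [show 0 ≤ 16 * N * μ ^ 2 * f * (μ * f + 3) by positivity]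

lemma cubic_bound_le_of_le_log {f N a β : ℝ} (hf : 0 < f) (hN : 0 ≤ N) (ha : 0 ≤ a) (hβ : 1 < β)
    {t : ℕ} (ht : (t : ℝ) ≤ Real.log (f / (16 * N * a ^ 2)) / (3 * Real.log β)) :
    16 / f * N * β ^ (3 * t) * a ^ 3 ≤ a := by
  rcases hN.eq_or_lt with rfl | hN
  · simpa using ha
  rcases ha.eq_or_lt with rfl | ha
  · simp
  have hpow : β ^ (3 * t) ≤ f / (16 * N * a ^ 2) := by
    rw [← Real.log_le_log_iff (by positivity) (by positivity), Real.log_pow]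
    have := (le_div_iff₀ (by have := Real.log_pos hβ; positivity)).mp ht
    push_cast
    linarith
  calc 16 / f * N * β ^ (3 * t) * a ^ 3 ≤ 16 / f * N * (f / (16 * N * a ^ 2)) * a ^ 3 := by
        gcongr
    _ = a := by field_simp

theorem statement4_power_method_error_general
    {n₁ n₂ m k r : ℕ}
    (A : Fin m → Matrix (Fin n₁) (Fin n₂) ℝ) (X : Matrix (Fin n₁) (Fin n₂) ℝ)
    (μ : ℝ) (hμ : 0 < μ)
    (V₀ : Matrix (Fin n₁) (Fin k) ℝ) (W₀ : Matrix (Fin n₂) (Fin k) ℝ)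
    (Z : ℕ → Matrix (Fin n₁ ⊕ Fin n₂) (Fin k) ℝ) (hZ : Z = Zit A X μ V₀ W₀)
    (F : Matrix (Fin n₁ ⊕ Fin n₂) (Fin n₁ ⊕ Fin n₂) ℝ) (hF : F = BstarB A (symMat X))
    (δ : ℝ) (hδ1 : δ < 1) (hRIP : HasRIP A (2 * r + 1) δ) :
    ∀ t : ℕ,
      (t : ℝ) ≤ Real.log (specNorm F / (16 * ((min k (n₁ + n₂) : ℕ) : ℝ) * specNorm (Z 0) ^ 2))
          / (3 * Real.log (1 + μ * specNorm F)) →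
      specNorm (Z t - (1 + μ • F) ^ t * Z 0)
          ≤ 16 / specNorm F * ((min k (n₁ + n₂) : ℕ) : ℝ) * (1 + μ * specNorm F) ^ (3 * t)
            * specNorm (Z 0) ^ 3 ∧
      16 / specNorm F * ((min k (n₁ + n₂) : ℕ) : ℝ) * (1 + μ * specNorm F) ^ (3 * t)
          * specNorm (Z 0) ^ 3 ≤ specNorm (Z 0) := by
  open scoped Matrix.Norms.L2Operator in
  · intro t ht
    simp only [specNorm_eq_norm] at ht ⊢
    rw [BstarB_symMat] at hF
    subst hZ hF
    set N : ℝ := ((min k (n₁ + n₂) : ℕ) : ℝ)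
    rcases (norm_nonneg (symMat (AstarA A X))).eq_or_lt with hf | hf
    -- `‖F‖ = 0` forces `t = 0`, as `Real.log 0 = 0`.
    · obtain rfl : t = 0 := by simpa [← hf] using ht
      simp [← hf]
    have hβ : 1 < 1 + μ * ‖symMat (AstarA A X)‖ := lt_add_of_pos_right _ (mul_pos hμ hf)
    have hbound := cubic_bound_le_of_le_log hf (Nat.cast_nonneg _) (norm_nonneg _) hβ ht
    refine ⟨norm_sub_pow_mul_le_of_cubic_perturbation (c := 4 * μ * N) hβ.le (by positivity)
      (by positivity) (norm_one_add_smul_le hμ.le _)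
      (error_constant_absorbs_perturbation hf hμ.le (by positivity)) (Zit_succ A X μ V₀ W₀)
      (fun s => ?_) t hbound, hbound⟩
    have h := norm_symMat_AstarA_mul_Zstack_le hRIP (by omega) hδ1.le
      (iter A X μ V₀ W₀ s).1 (iter A X μ V₀ W₀ s).2
    rw [norm_smul, Real.norm_of_nonneg hμ.le]
    calc _ ≤ μ * (4 * N * ‖Zit A X μ V₀ W₀ s‖ ^ 3) := mul_le_mul_of_nonneg_left h hμ.le
      _ = _ := by ring

/-- closeness of the gradient descent iterates to the power method iterates. -/
theorem statement4_power_method_error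
    {n₁ n₂ m k r : ℕ}
    (A : Fin m → Matrix (Fin n₁) (Fin n₂) ℝ) (X : Matrix (Fin n₁) (Fin n₂) ℝ)
    (hrankX : X.rank = r)
    (μ : ℝ) (hμ : 0 < μ)
    (V₀ : Matrix (Fin n₁) (Fin k) ℝ) (W₀ : Matrix (Fin n₂) (Fin k) ℝ)
    (Z : ℕ → Matrix (Fin n₁ ⊕ Fin n₂) (Fin k) ℝ) (hZ : Z = Zit A X μ V₀ W₀)
    (F : Matrix (Fin n₁ ⊕ Fin n₂) (Fin n₁ ⊕ Fin n₂) ℝ) (hF : F = BstarB A (symMat X))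
    (δ : ℝ) (hδ0 : 0 < δ) (hδ1 : δ < 1) (hRIP : HasRIP A (2 * r + 1) δ)
    (hZ0 : specNorm (Z 0) ^ 2 ≤ specNorm F / 16) :
    ∀ t : ℕ,
      (t : ℝ) ≤ Real.log (specNorm F / (16 * ((min k (n₁ + n₂) : ℕ) : ℝ) * specNorm (Z 0) ^ 2))
          / (3 * Real.log (1 + μ * specNorm F)) →
      specNorm (Z t - (1 + μ • F) ^ t * Z 0)
          ≤ 16 / specNorm F * ((min k (n₁ + n₂) : ℕ) : ℝ) * (1 + μ * specNorm F) ^ (3 * t)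
            * specNorm (Z 0) ^ 3 ∧
      16 / specNorm F * ((min k (n₁ + n₂) : ℕ) : ℝ) * (1 + μ * specNorm F) ^ (3 * t)
          * specNorm (Z 0) ^ 3 ≤ specNorm (Z 0) :=
  statement4_power_method_error_general A X μ hμ V₀ W₀ Z hZ F hF δ hδ1 hRIP

end AsymMatrixSensing
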